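/- arXiv:1709.05787 — 7 statements merged into one kernel-verified Lean document; each statement's English description precedes it below -/
import Mathlib

section
/- Let 0 < β < 1, θ ≥ 0, δ > 0, ρ > 0 and set φ := (1−β+θ)/(1−β) and δ* := δφ. Suppose μ, h : ℝ → ℝ are differentiable with h(t) > 0 for all t, u : ℝ → ℝ is any function, h'(t) = δ(1−u(t))h(t) and μ'(t) = μ(t)(ρ−δ) − (μ(t)θδ/(1−β))·u(t) for all t. Then the function μ*(t) := μ(t)·φ^{−1}·h(t)^{1−φ} satisfies (μ*)'(t) = μ*(t)(ρ−δ*) for all t. -/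
/-! The transformation is a computation with growth rates: the growth rate of `μ * h ^ p` is
that of `μ` plus `p` times that of `h`. With `p = 1 - φ` and `θ / (1 - β) = φ - 1`, the terms
in `u` cancel and the remaining rate is `ρ - δ + (1 - φ) δ = ρ - δ φ`. -/

theorem HasDerivAt.mul_rpow_const_of_growth_rates {f g : ℝ → ℝ} {a b p t : ℝ}
    (hf : HasDerivAt f (f t * a) t) (hg : HasDerivAt g (b * g t) t) (hg0 : g t ≠ 0) :
    HasDerivAt (fun s => f s * g s ^ p) (f t * g t ^ p * (a + p * b)) t := by
  refine (hf.mul (hg.rpow_const (p := p) (Or.inl hg0))).congr_deriv ?_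
  rw [Real.rpow_sub_one hg0]
  field_simp

theorem mustar_deriv_general (β θ δ ρ : ℝ)
    (hβ1 : β < 1)
    (φ δs : ℝ) (hφ : φ = (1 - β + θ) / (1 - β)) (hδs : δs = δ * φ)
    (μ h u : ℝ → ℝ) (hpos : ∀ t, 0 < h t)
    (hderh : ∀ t, HasDerivAt h (δ * (1 - u t) * h t) t)
    (hderμ : ∀ t, HasDerivAt μ (μ t * (ρ - δ) - μ t * θ * δ / (1 - β) * u t) t) :
    ∀ t, HasDerivAt (fun s => μ s * φ⁻¹ * h s ^ (1 - φ))
      ((μ t * φ⁻¹ * h t ^ (1 - φ)) * (ρ - δs)) t := by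
  intro t
  have hθφ : θ / (1 - β) = φ - 1 := by
    rw [hφ]
    field_simp [(sub_pos.mpr hβ1).ne']
    ring
  have hμφ : HasDerivAt (fun s => μ s * φ⁻¹)
      (μ t * φ⁻¹ * ((ρ - δ) - (φ - 1) * δ * u t)) t :=
    ((hderμ t).mul_const φ⁻¹).congr_deriv (by rw [← hθφ]; ring)
  refine (hμφ.mul_rpow_const_of_growth_rates (hderh t) (hpos t).ne').congr_deriv ?_
  rw [hδs]
  ring

/-- Hiraguchi's transformation for the costate variable: if h' = δ(1-u)h and
μ' = μ(ρ-δ) - (μθδ/(1-β))u, then μ* := μ·φ⁻¹·h^{1-φ} satisfies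
(μ*)' = μ*(ρ-δ*) with δ* = δφ, φ = (1-β+θ)/(1-β). -/
theorem mustar_deriv (β θ δ ρ : ℝ)
    (hβ0 : 0 < β) (hβ1 : β < 1) (hθ : 0 ≤ θ) (hδ : 0 < δ) (hρ : 0 < ρ)
    (φ δs : ℝ) (hφ : φ = (1 - β + θ) / (1 - β)) (hδs : δs = δ * φ)
    (μ h u : ℝ → ℝ) (hpos : ∀ t, 0 < h t)
    (hderh : ∀ t, HasDerivAt h (δ * (1 - u t) * h t) t)
    (hderμ : ∀ t, HasDerivAt μ (μ t * (ρ - δ) - μ t * θ * δ / (1 - β) * u t) t) :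
    ∀ t, HasDerivAt (fun s => μ s * φ⁻¹ * h s ^ (1 - φ))
      ((μ t * φ⁻¹ * h t ^ (1 - φ)) * (ρ - δs)) t :=
  mustar_deriv_general β θ δ ρ hβ1 φ δs hφ hδs μ h u hpos hderh hderμ
end

section
/- Let 0 < β < 1, σ > 0, γ > 0, δ* > 0, ρ > 0, π ≥ 0. Suppose c, k, h*, u, λ, μ* : ℝ → ℝ are differentiable and strictly positive and satisfy for all t: (T1) λ = c^{−σ}; (T2) (h*·u/k)^β = (γ(1−β)/δ*)·(λ/μ*); (T3) k' = γ·k^β·(u·h*)^{1−β} − πk − c; (T4) (h*)' = δ*(1−u)h*; (T5) λ' = −λ·βγ·(h*·u/k)^{1−β} + λ(ρ+π); (T6) (μ*)' = μ*(ρ−δ*). Then for all t, u'(t)/u(t) = (δ*+π)(1−β)/β − c(t)/k(t) + δ*·u(t). -/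
/-!
Taking logarithms in (T2) and differentiating turns it into a linear relation between growth
rates, `β (ĥ + û - k̂) = λ̂ - μ̂`. By (T3)–(T6) every growth rate other than `û` is explicit, and the
terms `β γ (h* u / k)^(1-β)` coming from `k̂` and `λ̂` cancel, leaving a linear equation for `û`.
-/

open Real

lemma logDeriv_rpow_const {f : ℝ → ℝ} {x : ℝ} (r : ℝ) (hf : 0 < f x)
    (hdf : DifferentiableAt ℝ f x) :
    logDeriv (fun s => f s ^ r) x = r * logDeriv f x := by
  rw [logDeriv_apply, logDeriv_apply, (hdf.hasDerivAt.rpow_const (Or.inl hf.ne')).deriv,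
    rpow_sub_one hf.ne']
  field_simp

lemma rpow_mul_rpow_one_sub {k a : ℝ} (β : ℝ) (hk : 0 < k) (ha : 0 ≤ a) :
    k ^ β * a ^ (1 - β) = (a / k) ^ (1 - β) * k := by
  have hk_split : k ^ β * k ^ (1 - β) = k := by
    rw [← rpow_add hk, add_sub_cancel, rpow_one]
  rw [div_rpow ha hk.le]
  field_simp
  linear_combination a ^ (1 - β) * hk_split

lemma logDeriv_relation_of_rpow_eq {f g h l m : ℝ → ℝ} {a C x : ℝ}
    (hf : 0 < f x) (hg : 0 < g x) (hh : 0 < h x) (hl : 0 < l x) (hm : 0 < m x)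
    (hdf : DifferentiableAt ℝ f x) (hdg : DifferentiableAt ℝ g x) (hdh : DifferentiableAt ℝ h x)
    (hdl : DifferentiableAt ℝ l x) (hdm : DifferentiableAt ℝ m x)
    (heq : ∀ s, (f s * g s / h s) ^ a = C * (l s / m s)) :
    a * (logDeriv f x + logDeriv g x - logDeriv h x) = logDeriv l x - logDeriv m x := by
  have hC : C ≠ 0 := by
    rintro rfl
    have := heq x
    rw [zero_mul] at this
    exact (rpow_pos_of_pos (by positivity) a).ne' this
  have hlog : logDeriv (fun s => (f s * g s / h s) ^ a) x
      = logDeriv (fun s => C * (l s / m s)) x := by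
    rw [funext heq]
  have hdfg : DifferentiableAt ℝ (fun s => f s * g s) x := hdf.mul hdg
  rwa [logDeriv_rpow_const (f := fun s => f s * g s / h s) a (by positivity)
      (hdfg.div hdh hh.ne'),
    logDeriv_div (f := fun s => f s * g s) x (mul_pos hf hg).ne' hh.ne' hdfg hdh,
    logDeriv_mul x hf.ne' hg.ne' hdf hdg, logDeriv_const_mul x C hC,
    logDeriv_div x hl.ne' hm.ne' hdl hdm] at hlog

theorem u_growth_rate_general (β γ δs ρ pi : ℝ)
    (hβ0 : 0 < β)
    (c k hs u lam mus : ℝ → ℝ)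
    (hkd : Differentiable ℝ k)
    (hhd : Differentiable ℝ hs) (hud : Differentiable ℝ u)
    (hld : Differentiable ℝ lam) (hmd : Differentiable ℝ mus)
    (hkpos : ∀ t, 0 < k t) (hhpos : ∀ t, 0 < hs t)
    (hupos : ∀ t, 0 < u t) (hlpos : ∀ t, 0 < lam t) (hmpos : ∀ t, 0 < mus t)
    (T2 : ∀ t, (hs t * u t / k t) ^ β = γ * (1 - β) / δs * (lam t / mus t))
    (T3 : ∀ t, deriv k t = γ * k t ^ β * (u t * hs t) ^ (1 - β) - pi * k t - c t)
    (T4 : ∀ t, deriv hs t = δs * (1 - u t) * hs t)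
    (T5 : ∀ t, deriv lam t
      = -(lam t) * (β * γ) * (hs t * u t / k t) ^ (1 - β) + lam t * (ρ + pi))
    (T6 : ∀ t, deriv mus t = mus t * (ρ - δs)) :
    ∀ t, deriv u t / u t = (δs + pi) * (1 - β) / β - c t / k t + δs * u t := by
  intro t
  have hk := hkpos t
  have hh := hhpos t
  have hu := hupos t
  have hrates := logDeriv_relation_of_rpow_eq hh hu hk (hlpos t) (hmpos t)
    (hhd t) (hud t) (hkd t) (hld t) (hmd t) T2
  have hrate_k : logDeriv k t = γ * (hs t * u t / k t) ^ (1 - β) - pi - c t / k t := by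
    rw [logDeriv_apply, T3, mul_assoc, mul_comm (u t),
      rpow_mul_rpow_one_sub β hk (mul_pos hh hu).le]
    field_simp
  have hrate_hs : logDeriv hs t = δs * (1 - u t) := by
    rw [logDeriv_apply, T4]
    field_simp
  have hrate_lam : logDeriv lam t = -(β * γ) * (hs t * u t / k t) ^ (1 - β) + (ρ + pi) := by
    rw [logDeriv_apply, T5]
    field_simp [(hlpos t).ne']
  have hrate_mus : logDeriv mus t = ρ - δs := by
    rw [logDeriv_apply, T6]
    field_simp [(hmpos t).ne']
  rw [hrate_k, hrate_hs, hrate_lam, hrate_mus, logDeriv_apply] at hrates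
  generalize (hs t * u t / k t) ^ (1 - β) = X at hrates
  field_simp at hrates ⊢
  linear_combination hrates

/-- In the transformed Lucas-Uzawa model, the first-order conditions (T1)-(T6)
imply the growth-rate equation u'/u = (δ*+π)(1-β)/β - c/k + δ*u. -/
theorem u_growth_rate (β σ γ δs ρ pi : ℝ)
    (hβ0 : 0 < β) (hβ1 : β < 1) (hσ : 0 < σ) (hγ : 0 < γ)
    (hδs : 0 < δs) (hρ : 0 < ρ) (hpi : 0 ≤ pi)
    (c k hs u lam mus : ℝ → ℝ)
    (hcd : Differentiable ℝ c) (hkd : Differentiable ℝ k)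
    (hhd : Differentiable ℝ hs) (hud : Differentiable ℝ u)
    (hld : Differentiable ℝ lam) (hmd : Differentiable ℝ mus)
    (hcpos : ∀ t, 0 < c t) (hkpos : ∀ t, 0 < k t) (hhpos : ∀ t, 0 < hs t)
    (hupos : ∀ t, 0 < u t) (hlpos : ∀ t, 0 < lam t) (hmpos : ∀ t, 0 < mus t)
    (T1 : ∀ t, lam t = c t ^ (-σ))
    (T2 : ∀ t, (hs t * u t / k t) ^ β = γ * (1 - β) / δs * (lam t / mus t))
    (T3 : ∀ t, deriv k t = γ * k t ^ β * (u t * hs t) ^ (1 - β) - pi * k t - c t)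
    (T4 : ∀ t, deriv hs t = δs * (1 - u t) * hs t)
    (T5 : ∀ t, deriv lam t
      = -(lam t) * (β * γ) * (hs t * u t / k t) ^ (1 - β) + lam t * (ρ + pi))
    (T6 : ∀ t, deriv mus t = mus t * (ρ - δs)) :
    ∀ t, deriv u t / u t = (δs + pi) * (1 - β) / β - c t / k t + δs * u t :=
  u_growth_rate_general β γ δs ρ pi hβ0 c k hs u lam mus hkd hhd hud hld hmd hkpos hhpos hupos hlpos
    hmpos T2 T3 T4 T5 T6
end

section
/- Let 0 < β < 1, σ > 0 with σ ≠ 1, γ > 0, π ≥ 0, δ* > 0, ρ > 0, c₁ > 0, and suppose ρ < δ* < ρ + δ*σ. Set z̄ := ((δ*+π)/(βγ))^{1/(1−β)}, ū := (ρ + δ*(σ−1))/(δ*σ), ξ := (δ* + π(1−β))/β − (δ*−ρ)/σ, g := (δ*−ρ)/σ, c₀ := ((1−β)γ/(c₁·δ*·z̄^β))^{1/σ}, k₀ := c₀/ξ, h₀ := z̄·k₀/ū. Define c(t) = c₀e^{g t}, k(t) = k₀e^{g t}, u(t) = ū, h*(t) = h₀e^{g t}, λ(t) = c₀^{−σ}e^{(ρ−δ*)t},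 μ*(t) = c₁e^{(ρ−δ*)t}. Then these functions satisfy, for all t: (T1) λ = c^{−σ}; (T2) (h*·u/k)^β = (γ(1−β)/δ*)·(λ/μ*); (T3) k' = γ·k^β·(u·h*)^{1−β} − πk − c; (T4) (h*)' = δ*(1−u)h*; (T5) λ' = −λ·βγ·(h*·u/k)^{1−β} + λ(ρ+π); (T6) (μ*)' = μ*(ρ−δ*); moreover e^{−ρt}λ(t)k(t) → 0 and e^{−ρt}μ*(t)h*(t) → 0 as t → ∞. -/
/-!
Along the balanced growth path every variable is a constant multiple of an exponential, so each
condition reduces to an identity between initial values and growth rates: a derivative is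
multiplication by the growth rate, the ratio `u h* / k` stays at `z̄`, and the Cobb–Douglas term is
homogeneous of degree one in `(k, u h*)`. The constants are chosen to make these identities hold:
`z̄` equates the marginal product `βγ z̄^(1-β)` with `δ* + π`, `ū` makes the growth rate
`δ*(1 - ū)` of `h*` equal to `g`, `ξ` is the consumption–capital ratio forced by (T3), and `c₀` is
fixed by (T2) at `t = 0`. The discounted shadow values decay like `e^((g - δ*) t)`, and `g < δ*`.
-/

open Filter Real Topology

lemma deriv_eq_mul_of_eq_const_mul_exp {f : ℝ → ℝ} {A a : ℝ} (hf : ∀ t, f t = A * exp (a * t))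
    (t : ℝ) : deriv f t = a * f t := by
  rw [funext hf, (((hasDerivAt_id' t).const_mul a).exp.const_mul A).deriv]
  ring

lemma mul_exp_rpow {A : ℝ} (hA : 0 ≤ A) (x p : ℝ) : (A * exp x) ^ p = A ^ p * exp (x * p) := by
  rw [mul_rpow hA (exp_pos x).le, exp_mul]

lemma rpow_mul_mul_rpow_one_sub {k z : ℝ} (hk : 0 ≤ k) (hz : 0 ≤ z) (β : ℝ) :
    k ^ β * (z * k) ^ (1 - β) = z ^ (1 - β) * k := by
  calc k ^ β * (z * k) ^ (1 - β) = z ^ (1 - β) * (k ^ β * k ^ (1 - β)) := by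
        rw [mul_rpow hz hk]; ring
    _ = z ^ (1 - β) * k := by rw [← rpow_add' hk (by simp), add_sub_cancel, rpow_one]

lemma tendsto_discount_mul_exp_mul_exp {ρ a b : ℝ} (h : a + b < ρ) (A B : ℝ) :
    Tendsto (fun t => exp (-ρ * t) * (A * exp (a * t)) * (B * exp (b * t))) atTop (𝓝 0) := by
  have hexp : Tendsto (fun t => exp ((a + b - ρ) * t)) atTop (𝓝 0) :=
    tendsto_exp_atBot.comp (tendsto_id.const_mul_atTop_of_neg (by linarith))
  convert hexp.const_mul (A * B) using 1
  · ext t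
    rw [show (a + b - ρ) * t = -ρ * t + a * t + b * t by ring, exp_add, exp_add]
    ring
  · simp

theorem balancedGrowth_first_order_conditions {β σ γ pi δs ρ c1 z ub g c0 k0 h0 : ℝ}
    (hz : 0 ≤ z) (hc0 : 0 ≤ c0) (hk0 : 0 < k0) (hub : ub ≠ 0)
    (hmpk : β * γ * z ^ (1 - β) = δs + pi)
    (hresource : c0 = (γ * z ^ (1 - β) - pi - g) * k0)
    (hfoc : z ^ β = γ * (1 - β) / δs * (c0 ^ (-σ) / c1))
    (hgσ : g * σ = δs - ρ) (hgu : g = δs * (1 - ub)) (hh0 : h0 = z * k0 / ub)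
    {c k u hs lam mus : ℝ → ℝ}
    (hc : ∀ t, c t = c0 * exp (g * t))
    (hk : ∀ t, k t = k0 * exp (g * t))
    (hu : ∀ t, u t = ub)
    (hhs : ∀ t, hs t = h0 * exp (g * t))
    (hlam : ∀ t, lam t = c0 ^ (-σ) * exp ((ρ - δs) * t))
    (hmus : ∀ t, mus t = c1 * exp ((ρ - δs) * t)) :
    (∀ t, lam t = c t ^ (-σ)) ∧
    (∀ t, (hs t * u t / k t) ^ β = γ * (1 - β) / δs * (lam t / mus t)) ∧
    (∀ t, deriv k t = γ * k t ^ β * (u t * hs t) ^ (1 - β) - pi * k t - c t) ∧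
    (∀ t, deriv hs t = δs * (1 - u t) * hs t) ∧
    (∀ t, deriv lam t
      = -(lam t) * (β * γ) * (hs t * u t / k t) ^ (1 - β) + lam t * (ρ + pi)) ∧
    (∀ t, deriv mus t = mus t * (ρ - δs)) := by
  have hlabor : ∀ t, u t * hs t = z * k t := fun t => by
    rw [hu, hhs, hk, hh0]; field_simp
  have hratio : ∀ t, hs t * u t / k t = z := fun t => by
    rw [mul_comm, hlabor, hk]; field_simp
  refine ⟨fun t => ?_, fun t => ?_, fun t => ?_, fun t => ?_, fun t => ?_, fun t => ?_⟩
  · rw [hlam, hc, mul_exp_rpow hc0,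
      show g * t * -σ = (ρ - δs) * t by linear_combination (-t) * hgσ]
  · rw [hratio, hfoc, hlam, hmus, mul_div_mul_right _ _ (exp_pos _).ne']
  · have hkt : 0 ≤ k t := by rw [hk]; positivity
    rw [deriv_eq_mul_of_eq_const_mul_exp hk, hlabor, mul_assoc γ,
      rpow_mul_mul_rpow_one_sub hkt hz, hk, hc, hresource]
    ring
  · rw [deriv_eq_mul_of_eq_const_mul_exp hhs, hu, hgu]
  · rw [deriv_eq_mul_of_eq_const_mul_exp hlam, hratio, hlam]
    linear_combination (c0 ^ (-σ) * exp ((ρ - δs) * t)) * hmpk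
  · rw [deriv_eq_mul_of_eq_const_mul_exp hmus, mul_comm]

lemma laborCapitalRatio_spec {β γ pi δs zbar : ℝ} (hβ0 : 0 < β) (hβ1 : β < 1) (hγ : 0 < γ)
    (hδπ : 0 < δs + pi) (hzbar : zbar = ((δs + pi) / (β * γ)) ^ (1 / (1 - β))) :
    0 < zbar ∧ β * γ * zbar ^ (1 - β) = δs + pi := by
  have hbase : 0 < (δs + pi) / (β * γ) := by positivity
  refine ⟨hzbar ▸ rpow_pos_of_pos hbase _, ?_⟩
  rw [hzbar, one_div, rpow_inv_rpow hbase.le (sub_ne_zero.mpr hβ1.ne')]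
  field_simp

lemma balancedGrowthRate_lt {σ δs ρ g : ℝ} (hσ : 0 < σ) (hδρ : δs < ρ + δs * σ)
    (hg : g = (δs - ρ) / σ) : g < δs := by
  rw [hg, div_lt_iff₀ hσ]
  linarith

lemma laborShare_spec {σ δs ρ g ubar : ℝ} (hσ : 0 < σ) (hδs : 0 < δs)
    (hδρ : δs < ρ + δs * σ) (hubar : ubar = (ρ + δs * (σ - 1)) / (δs * σ))
    (hg : g = (δs - ρ) / σ) : 0 < ubar ∧ g = δs * (1 - ubar) := by
  refine ⟨hubar ▸ div_pos (by linarith) (by positivity), ?_⟩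
  rw [hg, hubar]
  field_simp
  ring

lemma consumptionCapitalRatio_spec {β γ pi δs g zbar ξ : ℝ} (hβ0 : 0 < β) (hβ1 : β < 1)
    (hpi : 0 ≤ pi) (hδs : 0 < δs) (hmpk : β * γ * zbar ^ (1 - β) = δs + pi) (hgδ : g < δs)
    (hξ : ξ = (δs + pi * (1 - β)) / β - g) : 0 < ξ ∧ ξ = γ * zbar ^ (1 - β) - pi - g := by
  have hδβ : δs ≤ (δs + pi * (1 - β)) / β := by
    rw [le_div_iff₀ hβ0]
    nlinarith
  have hγz : γ * zbar ^ (1 - β) = (δs + pi) / β := by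
    rw [← hmpk]
    field_simp
  refine ⟨by linarith, ?_⟩
  rw [hξ, hγz]
  field_simp
  ring

lemma initialConsumption_spec {β σ γ δs c1 zbar c0 : ℝ} (hβ1 : β < 1) (hσ : 0 < σ)
    (hγ : 0 < γ) (hδs : 0 < δs) (hc1 : 0 < c1) (hzbar : 0 < zbar)
    (hc0 : c0 = ((1 - β) * γ / (c1 * δs * zbar ^ β)) ^ (1 / σ)) :
    0 < c0 ∧ zbar ^ β = γ * (1 - β) / δs * (c0 ^ (-σ) / c1) := by
  have h1β : 0 < 1 - β := by linarith
  have hbase : 0 < (1 - β) * γ / (c1 * δs * zbar ^ β) := by positivity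
  refine ⟨hc0 ▸ rpow_pos_of_pos hbase _, ?_⟩
  rw [rpow_neg (hc0 ▸ rpow_nonneg hbase.le _), hc0, one_div, rpow_inv_rpow hbase.le hσ.ne']
  field_simp

theorem first_solution_verifies_general (β σ γ pi δs ρ c1 : ℝ)
    (hβ0 : 0 < β) (hβ1 : β < 1) (hσ : 0 < σ) (hγ : 0 < γ)
    (hpi : 0 ≤ pi) (hδs : 0 < δs) (hc1 : 0 < c1)
    (hδρ : δs < ρ + δs * σ)
    (zbar ubar ξ g c0 k0 h0 : ℝ)
    (hzbar : zbar = ((δs + pi) / (β * γ)) ^ (1 / (1 - β)))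
    (hubar : ubar = (ρ + δs * (σ - 1)) / (δs * σ))
    (hξ : ξ = (δs + pi * (1 - β)) / β - (δs - ρ) / σ)
    (hg : g = (δs - ρ) / σ)
    (hc0 : c0 = ((1 - β) * γ / (c1 * δs * zbar ^ β)) ^ (1 / σ))
    (hk0 : k0 = c0 / ξ)
    (hh0 : h0 = zbar * k0 / ubar)
    (c k u hs lam mus : ℝ → ℝ)
    (hc : ∀ t, c t = c0 * Real.exp (g * t))
    (hk : ∀ t, k t = k0 * Real.exp (g * t))
    (hu : ∀ t, u t = ubar)
    (hhs : ∀ t, hs t = h0 * Real.exp (g * t))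
    (hlam : ∀ t, lam t = c0 ^ (-σ) * Real.exp ((ρ - δs) * t))
    (hmus : ∀ t, mus t = c1 * Real.exp ((ρ - δs) * t)) :
    (∀ t, lam t = c t ^ (-σ)) ∧
    (∀ t, (hs t * u t / k t) ^ β = γ * (1 - β) / δs * (lam t / mus t)) ∧
    (∀ t, deriv k t = γ * k t ^ β * (u t * hs t) ^ (1 - β) - pi * k t - c t) ∧
    (∀ t, deriv hs t = δs * (1 - u t) * hs t) ∧
    (∀ t, deriv lam t
      = -(lam t) * (β * γ) * (hs t * u t / k t) ^ (1 - β) + lam t * (ρ + pi)) ∧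
    (∀ t, deriv mus t = mus t * (ρ - δs)) ∧
    Tendsto (fun t => Real.exp (-ρ * t) * lam t * k t) atTop (nhds 0) ∧
    Tendsto (fun t => Real.exp (-ρ * t) * mus t * hs t) atTop (nhds 0) := by
  obtain ⟨hzbar_pos, hmpk⟩ := laborCapitalRatio_spec hβ0 hβ1 hγ (by linarith) hzbar
  have hgδ : g < δs := balancedGrowthRate_lt hσ hδρ hg
  obtain ⟨hubar_pos, hgu⟩ := laborShare_spec hσ hδs hδρ hubar hg
  obtain ⟨hξ_pos, hξ_eq⟩ := consumptionCapitalRatio_spec hβ0 hβ1 hpi hδs hmpk hgδ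
    (by rw [hξ, hg] : ξ = _ - g)
  obtain ⟨hc0_pos, hfoc⟩ := initialConsumption_spec hβ1 hσ hγ hδs hc1 hzbar_pos hc0
  have hk0_pos : 0 < k0 := hk0 ▸ div_pos hc0_pos hξ_pos
  have hresource : c0 = (γ * zbar ^ (1 - β) - pi - g) * k0 := by
    rw [hk0, ← hξ_eq]
    field_simp
  have hgσ : g * σ = δs - ρ := by
    rw [hg]
    field_simp
  obtain ⟨hT1, hT2, hT3, hT4, hT5, hT6⟩ := balancedGrowth_first_order_conditions hzbar_pos.le
    hc0_pos.le hk0_pos hubar_pos.ne' hmpk hresource hfoc hgσ hgu hh0 hc hk hu hhs hlam hmus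
  refine ⟨hT1, hT2, hT3, hT4, hT5, hT6, ?_, ?_⟩
  · simpa only [hlam, hk] using
      tendsto_discount_mul_exp_mul_exp (by linarith : ρ - δs + g < ρ) (c0 ^ (-σ)) k0
  · simpa only [hmus, hhs] using
      tendsto_discount_mul_exp_mul_exp (by linarith : ρ - δs + g < ρ) c1 h0

/-- The first closed-form (balanced-growth-path) solution of the transformed
Lucas-Uzawa model satisfies the first-order conditions (T1)-(T6) and the
transversality conditions. -/
theorem first_solution_verifies (β σ γ pi δs ρ c1 : ℝ)
    (hβ0 : 0 < β) (hβ1 : β < 1) (hσ : 0 < σ) (hσ1 : σ ≠ 1) (hγ : 0 < γ)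
    (hpi : 0 ≤ pi) (hδs : 0 < δs) (hρ : 0 < ρ) (hc1 : 0 < c1)
    (hρδ : ρ < δs) (hδρ : δs < ρ + δs * σ)
    (zbar ubar ξ g c0 k0 h0 : ℝ)
    (hzbar : zbar = ((δs + pi) / (β * γ)) ^ (1 / (1 - β)))
    (hubar : ubar = (ρ + δs * (σ - 1)) / (δs * σ))
    (hξ : ξ = (δs + pi * (1 - β)) / β - (δs - ρ) / σ)
    (hg : g = (δs - ρ) / σ)
    (hc0 : c0 = ((1 - β) * γ / (c1 * δs * zbar ^ β)) ^ (1 / σ))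
    (hk0 : k0 = c0 / ξ)
    (hh0 : h0 = zbar * k0 / ubar)
    (c k u hs lam mus : ℝ → ℝ)
    (hc : ∀ t, c t = c0 * Real.exp (g * t))
    (hk : ∀ t, k t = k0 * Real.exp (g * t))
    (hu : ∀ t, u t = ubar)
    (hhs : ∀ t, hs t = h0 * Real.exp (g * t))
    (hlam : ∀ t, lam t = c0 ^ (-σ) * Real.exp ((ρ - δs) * t))
    (hmus : ∀ t, mus t = c1 * Real.exp ((ρ - δs) * t)) :
    (∀ t, lam t = c t ^ (-σ)) ∧
    (∀ t, (hs t * u t / k t) ^ β = γ * (1 - β) / δs * (lam t / mus t)) ∧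
    (∀ t, deriv k t = γ * k t ^ β * (u t * hs t) ^ (1 - β) - pi * k t - c t) ∧
    (∀ t, deriv hs t = δs * (1 - u t) * hs t) ∧
    (∀ t, deriv lam t
      = -(lam t) * (β * γ) * (hs t * u t / k t) ^ (1 - β) + lam t * (ρ + pi)) ∧
    (∀ t, deriv mus t = mus t * (ρ - δs)) ∧
    Tendsto (fun t => Real.exp (-ρ * t) * lam t * k t) atTop (nhds 0) ∧
    Tendsto (fun t => Real.exp (-ρ * t) * mus t * hs t) atTop (nhds 0) :=
  first_solution_verifies_general β σ γ pi δs ρ c1 hβ0 hβ1 hσ hγ hpi hδs hc1 hδρ zbar ubar ξ g c0 k0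
    h0 hzbar hubar hξ hg hc0 hk0 hh0 c k u hs lam mus hc hk hu hhs hlam hmus
end

section
/- Let 0 < β < 1, σ > 0, γ > 0, π ≥ 0, δ* > 0, ρ > 0, c₀ > 0, z₀ > 0. Let z : ℝ → ℝ be differentiable with z(t) > 0 and z'(t)/z(t) = (δ*+π)/β − γ·z(t)^{1−β} for all t ≥ 0. Define c(t) := c₀·z₀^{β/σ}·e^{−((ρ−δ*)/σ)t}·z(t)^{−β/σ} and λ(t) := c₀^{−σ}·z₀^{−β}·e^{(ρ−δ*)t}·z(t)^{β}. Then for all t ≥ 0: λ(t) = c(t)^{−σ} and λ'(t) = −λ(t)·βγ·z(t)^{1−β} + λ(t)(ρ+π). -/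
/-!
Both identities are exponent bookkeeping. Raising `c` to the power `-σ` multiplies every exponent
in its closed form by `-σ`, which turns it into the closed form of `λ`. For the costate equation,
`λ` is a constant times `exp((ρ - δ*) t) z(t)^β`, so its logarithmic derivative is
`(ρ - δ*) + β z'/z`; substituting the equation for `z'/z` makes `δ*` cancel.
-/

open Real

lemma hasDerivAt_rpow_const_of_ne_zero {z : ℝ → ℝ} {t : ℝ} (hzd : DifferentiableAt ℝ z t)
    (hz : z t ≠ 0) (β : ℝ) :
    HasDerivAt (fun s => z s ^ β) (z t ^ β * (β * (deriv z t / z t))) t := by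
  refine (hzd.hasDerivAt.rpow_const (p := β) (Or.inl hz)).congr_deriv ?_
  rw [rpow_sub_one hz]
  ring

lemma hasDerivAt_const_mul_exp_mul_rpow {z : ℝ → ℝ} {t : ℝ} (hzd : DifferentiableAt ℝ z t)
    (hz : z t ≠ 0) (C a β : ℝ) :
    HasDerivAt (fun s => C * exp (a * s) * z s ^ β)
      (C * exp (a * t) * z t ^ β * (a + β * (deriv z t / z t))) t := by
  have hexp : HasDerivAt (fun s => exp (a * s)) (exp (a * t) * a) t := by
    simpa using ((hasDerivAt_id t).const_mul a).exp
  exact ((hexp.const_mul C).mul (hasDerivAt_rpow_const_of_ne_zero hzd hz β)).congr_deriv (by ring)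

lemma rpow_div_rpow_neg {x : ℝ} (hx : 0 ≤ x) {σ : ℝ} (hσ : σ ≠ 0) (a : ℝ) :
    (x ^ (a / σ)) ^ (-σ) = x ^ (-a) := by
  rw [← rpow_mul hx]
  congr 1
  field_simp

lemma exp_div_rpow_neg {σ : ℝ} (hσ : σ ≠ 0) (a : ℝ) :
    exp (a / σ) ^ (-σ) = exp (-a) := by
  rw [← exp_mul]
  congr 1
  field_simp

theorem c_lam_components_general (β σ γ pi δs ρ c0 z0 : ℝ)
    (hβ0 : 0 < β) (hσ : 0 < σ)
    (hc0 : 0 < c0) (hz0 : 0 < z0)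
    (z : ℝ → ℝ) (hzd : Differentiable ℝ z) (hzpos : ∀ t ≥ (0:ℝ), 0 < z t)
    (hzode : ∀ t ≥ (0:ℝ), deriv z t / z t = (δs + pi) / β - γ * z t ^ (1 - β))
    (c lam : ℝ → ℝ)
    (hc : ∀ t, c t = c0 * z0 ^ (β / σ) * Real.exp (-((ρ - δs) / σ) * t)
      * z t ^ (-(β / σ)))
    (hlam : ∀ t, lam t = c0 ^ (-σ) * z0 ^ (-β) * Real.exp ((ρ - δs) * t)
      * z t ^ β) :
    (∀ t ≥ (0:ℝ), lam t = c t ^ (-σ)) ∧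
    (∀ t ≥ (0:ℝ), deriv lam t
      = -(lam t) * (β * γ) * z t ^ (1 - β) + lam t * (ρ + pi)) := by
  refine ⟨fun t ht => ?_, fun t ht => ?_⟩
  · have hz := hzpos t ht
    have hexp : exp (-((ρ - δs) / σ) * t) = exp (-((ρ - δs) * t) / σ) := by ring_nf
    rw [hc, hlam, hexp, mul_rpow (by positivity) (by positivity),
      mul_rpow (by positivity) (by positivity), mul_rpow (by positivity) (by positivity),
      rpow_div_rpow_neg hz0.le hσ.ne', exp_div_rpow_neg hσ.ne', neg_neg, ← neg_div,
      rpow_div_rpow_neg hz.le hσ.ne', neg_neg]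
  · have hlam_fun : lam = fun s => c0 ^ (-σ) * z0 ^ (-β) * exp ((ρ - δs) * s) * z s ^ β :=
      funext hlam
    have hderiv := hasDerivAt_const_mul_exp_mul_rpow (hzd t) (hzpos t ht).ne'
      (c0 ^ (-σ) * z0 ^ (-β)) (ρ - δs) β
    rw [← hlam_fun, ← hlam, hzode t ht] at hderiv
    rw [hderiv.deriv]
    field_simp
    ring

/-- The consumption and costate components of the second and third closed-form
solutions of the transformed Lucas-Uzawa model: λ = c^{-σ} and λ satisfies the
costate equation λ' = -λβγz^{1-β} + λ(ρ+π). -/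
theorem c_lam_components (β σ γ pi δs ρ c0 z0 : ℝ)
    (hβ0 : 0 < β) (hβ1 : β < 1) (hσ : 0 < σ) (hγ : 0 < γ) (hpi : 0 ≤ pi)
    (hδs : 0 < δs) (hρ : 0 < ρ) (hc0 : 0 < c0) (hz0 : 0 < z0)
    (z : ℝ → ℝ) (hzd : Differentiable ℝ z) (hzpos : ∀ t ≥ (0:ℝ), 0 < z t)
    (hzode : ∀ t ≥ (0:ℝ), deriv z t / z t = (δs + pi) / β - γ * z t ^ (1 - β))
    (c lam : ℝ → ℝ)
    (hc : ∀ t, c t = c0 * z0 ^ (β / σ) * Real.exp (-((ρ - δs) / σ) * t)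
      * z t ^ (-(β / σ)))
    (hlam : ∀ t, lam t = c0 ^ (-σ) * z0 ^ (-β) * Real.exp ((ρ - δs) * t)
      * z t ^ β) :
    (∀ t ≥ (0:ℝ), lam t = c t ^ (-σ)) ∧
    (∀ t ≥ (0:ℝ), deriv lam t
      = -(lam t) * (β * γ) * z t ^ (1 - β) + lam t * (ρ + pi)) :=
  c_lam_components_general β σ γ pi δs ρ c0 z0 hβ0 hσ hc0 hz0 z hzd hzpos hzode c lam hc hlam
end

section
/- Let 0 < β < 1, σ > 0, γ > 0, π ≥ 0, δ* > 0, ρ > 0, c₀ > 0, k₀ > 0, z₀ > 0, and set ξ := (δ* + π(1−β))/β − (δ*−ρ)/σ and K := k₀/(c₀·z₀^{(β−σ)/σ}). Let z : ℝ → ℝ be continuous differentiable with z(t) > 0, z(0) = z₀ and z'(t)/z(t) = (δ*+π)/β − γ·z(t)^{1−β} for all t ≥ 0. Define F(t) := ∫₀ᵗ z(s)^{(σ−β)/σ}·e^{−ξ s} ds, c(t) := c₀·z₀^{β/σ}·e^{−((ρ−δ*)/σ)t}·z(t)^{−β/σ}, and k(t) := (K − F(t))·c₀·z₀^{β/σ}·z(t)^{−1}·e^{((δ*+π−πβ)/β)t},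 and assume K − F(t) > 0 for all t ≥ 0. Then k(0) = k₀ and for all t ≥ 0, k'(t) = γ·z(t)^{1−β}·k(t) − π·k(t) − c(t). -/
/-! Writing `k = g · z⁻¹ · e^{a t}` with `g = (K - F) c₀ z₀^{β/σ}` and `a = (δ* + π - πβ)/β`,
the product rule gives `k' = k (a - z'/z) + g' z⁻¹ e^{a t}`. The ODE for `z` turns `a - z'/z`
into `γ z^{1-β} - π`, and since `g' = -c₀ z₀^{β/σ} F'` with `F'(t) = z^{(σ-β)/σ} e^{-ξ t}`, the
second term is `-c` because `z^{(σ-β)/σ} z⁻¹ = z^{-β/σ}` and `a - ξ = (δ* - ρ)/σ`. -/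

open Real

lemma hasDerivAt_integral_rpow_mul_exp {z : ℝ → ℝ} {p ξ t : ℝ} (hz : Continuous z)
    (hz_ne : ∀ s ∈ Set.uIcc 0 t, z s ≠ 0) :
    HasDerivAt (fun u => ∫ s in (0:ℝ)..u, z s ^ p * exp (-ξ * s))
      (z t ^ p * exp (-ξ * t)) t := by
  have hcont : ContinuousOn (fun s => z s ^ p * exp (-ξ * s)) (Set.uIcc 0 t) :=
    (hz.continuousOn.rpow_const fun s hs => Or.inl (hz_ne s hs)).mul (by fun_prop)
  have hmeas : Measurable fun s => z s ^ p * exp (-ξ * s) := by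
    have := hz.measurable; fun_prop
  refine intervalIntegral.integral_hasDerivAt_right hcont.intervalIntegrable
    hmeas.aestronglyMeasurable.stronglyMeasurableAtFilter ?_
  exact (hz.continuousAt.rpow_const (Or.inl (hz_ne t Set.right_mem_uIcc))).mul (by fun_prop)

lemma hasDerivAt_mul_rpow_neg_one_mul_exp {g z : ℝ → ℝ} {g' z' a t : ℝ}
    (hg : HasDerivAt g g' t) (hz : HasDerivAt z z' t) (hzt : z t ≠ 0) :
    HasDerivAt (fun s => g s * z s ^ (-1:ℝ) * exp (a * s))
      (g t * z t ^ (-1:ℝ) * exp (a * t) * (a - z' / z t) + g' * z t ^ (-1:ℝ) * exp (a * t))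
      t := by
  simp only [rpow_neg_one]
  refine ((hg.fun_mul (hz.fun_inv hzt)).fun_mul
    ((hasDerivAt_id' t).const_mul a).exp).congr_deriv ?_
  field_simp
  ring

theorem k_component_general (β σ γ pi δs ρ c0 k0 z0 : ℝ)
    (hβ0 : 0 < β) (hσ : 0 < σ)
    (hc0 : 0 < c0) (hz0 : 0 < z0)
    (ξ K : ℝ)
    (hξ : ξ = (δs + pi * (1 - β)) / β - (δs - ρ) / σ)
    (hK : K = k0 / (c0 * z0 ^ ((β - σ) / σ)))
    (z : ℝ → ℝ) (hzd : Differentiable ℝ z) (hzpos : ∀ t ≥ (0:ℝ), 0 < z t)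
    (hzinit : z 0 = z0)
    (hzode : ∀ t ≥ (0:ℝ), deriv z t / z t = (δs + pi) / β - γ * z t ^ (1 - β))
    (F c k : ℝ → ℝ)
    (hF : ∀ t, F t = ∫ s in (0:ℝ)..t, z s ^ ((σ - β) / σ) * Real.exp (-ξ * s))
    (hc : ∀ t, c t = c0 * z0 ^ (β / σ) * Real.exp (-((ρ - δs) / σ) * t)
      * z t ^ (-(β / σ)))
    (hk : ∀ t, k t = (K - F t) * c0 * z0 ^ (β / σ) * z t ^ (-(1:ℝ))
      * Real.exp ((δs + pi - pi * β) / β * t)) :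
    k 0 = k0 ∧
    (∀ t ≥ (0:ℝ), deriv k t = γ * z t ^ (1 - β) * k t - pi * k t - c t) := by
  refine ⟨?_, fun t ht => ?_⟩
  · have hz0_pow : z0 ^ (β / σ) * z0 ^ (-(1:ℝ)) = z0 ^ ((β - σ) / σ) := by
      rw [← rpow_add hz0]; congr 1; field_simp; ring
    rw [hk, hF, intervalIntegral.integral_same, hzinit, hK, mul_zero, exp_zero, sub_zero,
      mul_one, mul_assoc _ (z0 ^ _), hz0_pow]
    field_simp
  · set a := (δs + pi - pi * β) / β with ha
    have hzt := hzpos t ht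
    have hF' : HasDerivAt F (z t ^ ((σ - β) / σ) * exp (-ξ * t)) t := by
      rw [funext hF]
      refine hasDerivAt_integral_rpow_mul_exp hzd.continuous fun s hs => (hzpos s ?_).ne'
      exact (Set.uIcc_of_le ht ▸ hs).1
    have hk' := hasDerivAt_mul_rpow_neg_one_mul_exp (a := a)
      (((hF'.const_sub K).mul_const c0).mul_const (z0 ^ (β / σ))) (hzd t).hasDerivAt hzt.ne'
    rw [← funext hk] at hk'
    have hgrowth : a - deriv z t / z t = γ * z t ^ (1 - β) - pi := by
      rw [hzode t ht, ha]; field_simp; ring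
    have hz_pow : z t ^ (-(β / σ)) = z t ^ ((σ - β) / σ) * z t ^ (-(1:ℝ)) := by
      rw [← rpow_add hzt]; congr 1; field_simp; ring
    have hexp : exp (-((ρ - δs) / σ) * t) = exp (-ξ * t) * exp (a * t) := by
      rw [← exp_add, hξ, ha]; congr 1; field_simp; ring
    rw [hk'.deriv, ← hk, hgrowth, hc, hz_pow, hexp]
    ring

/-- The physical-capital component of the second and third closed-form solutions
of the transformed Lucas-Uzawa model satisfies the resource constraint
k' = γz^{1-β}k - πk - c and the initial condition k(0) = k₀. -/
theorem k_component (β σ γ pi δs ρ c0 k0 z0 : ℝ)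
    (hβ0 : 0 < β) (hβ1 : β < 1) (hσ : 0 < σ) (hγ : 0 < γ) (hpi : 0 ≤ pi)
    (hδs : 0 < δs) (hρ : 0 < ρ) (hc0 : 0 < c0) (hk0 : 0 < k0) (hz0 : 0 < z0)
    (ξ K : ℝ)
    (hξ : ξ = (δs + pi * (1 - β)) / β - (δs - ρ) / σ)
    (hK : K = k0 / (c0 * z0 ^ ((β - σ) / σ)))
    (z : ℝ → ℝ) (hzd : Differentiable ℝ z) (hzpos : ∀ t ≥ (0:ℝ), 0 < z t)
    (hzinit : z 0 = z0)
    (hzode : ∀ t ≥ (0:ℝ), deriv z t / z t = (δs + pi) / β - γ * z t ^ (1 - β))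
    (F c k : ℝ → ℝ)
    (hF : ∀ t, F t = ∫ s in (0:ℝ)..t, z s ^ ((σ - β) / σ) * Real.exp (-ξ * s))
    (hc : ∀ t, c t = c0 * z0 ^ (β / σ) * Real.exp (-((ρ - δs) / σ) * t)
      * z t ^ (-(β / σ)))
    (hk : ∀ t, k t = (K - F t) * c0 * z0 ^ (β / σ) * z t ^ (-(1:ℝ))
      * Real.exp ((δs + pi - pi * β) / β * t))
    (hKF : ∀ t ≥ (0:ℝ), 0 < K - F t) :
    k 0 = k0 ∧
    (∀ t ≥ (0:ℝ), deriv k t = γ * z t ^ (1 - β) * k t - pi * k t - c t) :=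
  k_component_general β σ γ pi δs ρ c0 k0 z0 hβ0 hσ hc0 hz0 ξ K hξ hK z hzd hzpos hzinit hzode F c k
    hF hc hk
end

section
/- Let 0 < β < 1, σ > 0 with σ ≠ 1, γ > 0, π ≥ 0, δ* > 0, ρ > 0 with ρ < δ* < ρ + δ*σ, and c₀, k₀, u₀, z₀ > 0 with D := σc₀z₀^{β−1} − (ρ+π−πσ)k₀z₀^{β−1} + βγ(1−σ)k₀ satisfying γ(1−β)(ρ−δ*+δ*σ)/δ* = (u₀/k₀)·D. Set ξ := (δ*+π(1−β))/β − (δ*−ρ)/σ, z̄ := ((δ*+π)/(βγ))^{1/(1−β)}, ū := (ρ+δ*(σ−1))/(δ*σ), K := k₀/(c₀z₀^{(β−σ)/σ}), z(t) := z̄z₀/[(z̄^{1−β}−z₀^{1−β})e^{−((1−β)(δ*+π)/β)t}+z₀^{1−β}]^{1/(1−β)}, F(t) := ∫₀ᵗ z(s)^{(σ−β)/σ}e^{−ξ s} ds, and u(t) := (u₀/k₀)·D·(K−F(t)) / [ (βγ(1−σ)−(ρ+π−πσ)z(t)^{β−1})(K−F(t)) + σ·z(t)^{β−β/σ}e^{−ξ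 t} ]. Assume K − F(t) > 0 and the denominator of u(t) is positive for all t ≥ 0, and lim_{t→∞} F(t) = K. Then u(t) tends to ū as t → ∞. -/
/-!
Multiplying numerator and denominator of `u t` by `exp (ξ t)` expresses `u` through
`H t = (K - F t) / exp (-ξ t)` and powers of `z t`. Both `K - F t` and `exp (-ξ t)` tend to `0`,
and the quotient of their derivatives is `z t ^ ((σ - β) / σ) / ξ`, so by l'Hôpital's rule and
`z t → z̄` we get `H t → z̄ ^ ((σ - β) / σ) / ξ`. Since `z̄ ^ (β - 1) = β γ / (δ* + π)`, the limiting
denominator collapses to `σ γ (1 - β) z̄ ^ ((σ - β) / σ) / ξ`, and the slope condition on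
`u₀ / k₀ · D` turns the limit into `ū`.
-/

open Filter Set Real Topology

theorem tendsto_sub_integral_div_exp {φ F : ℝ → ℝ} {ξ L K : ℝ} (hξ : 0 < ξ)
    (hφc : ContinuousOn φ (Ici 0)) (hφ : Tendsto φ atTop (𝓝 L))
    (hF : ∀ t, F t = ∫ s in (0 : ℝ)..t, φ s * exp (-ξ * s)) (hFK : Tendsto F atTop (𝓝 K)) :
    Tendsto (fun t => (K - F t) / exp (-ξ * t)) atTop (𝓝 (L / ξ)) := by
  have hgc : ContinuousOn (fun s => φ s * exp (-ξ * s)) (Ici 0) := hφc.mul (by fun_prop)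
  have hFderiv : ∀ t ∈ Ioi (0 : ℝ), HasDerivAt F (φ t * exp (-ξ * t)) t := by
    intro t ht
    rw [funext hF]
    exact intervalIntegral.integral_hasDerivAt_right
      (hgc.mono ((uIcc_of_le ht.le).trans_subset Icc_subset_Ici_self)).intervalIntegrable
      ((hgc.mono Ioi_subset_Ici_self).stronglyMeasurableAtFilter isOpen_Ioi t ht)
      (hgc.continuousAt (Ici_mem_nhds ht))
  refine HasDerivAt.lhopital_zero_atTop_on_Ioi (a := 0)
    (f' := fun t => -(φ t * exp (-ξ * t))) (g' := fun t => exp (-ξ * t) * (-ξ * 1))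
    (fun t ht => (hFderiv t ht).const_sub K)
    (fun t _ => ((hasDerivAt_id t).const_mul (-ξ)).exp)
    (fun t _ => by simp [hξ.ne', (exp_pos _).ne'])
    (by simpa using (tendsto_const_nhds (x := K)).sub hFK) ?_ ?_
  · have := tendsto_exp_neg_atTop_nhds_zero.comp (tendsto_id.const_mul_atTop hξ)
    simpa only [Function.comp_def, id, neg_mul] using this
  · refine (hφ.div_const ξ).congr fun t => ?_
    field_simp [(exp_pos (-ξ * t)).ne']

section TransitionPath

variable {a b c C r : ℝ}

theorem sub_mul_exp_add_pos (ha : 0 < a) (hb : 0 < b) (hc : 0 ≤ c) {t : ℝ} (ht : 0 ≤ t) :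
    0 < (a - b) * exp (-c * t) + b := by
  have he : exp (-c * t) ≤ 1 := exp_le_one_iff.2 (by nlinarith)
  nlinarith [exp_pos (-c * t)]

theorem continuousOn_rpow_of_eq_div_sub_mul_exp_add_rpow {z : ℝ → ℝ} (hC : 0 < C) (ha : 0 < a)
    (hb : 0 < b) (hc : 0 ≤ c) (hz : ∀ t, z t = C / ((a - b) * exp (-c * t) + b) ^ r) (p : ℝ) :
    ContinuousOn (fun t => z t ^ p) (Ici 0) := by
  have hpos := fun t (ht : t ∈ Ici (0 : ℝ)) => sub_mul_exp_add_pos ha hb hc ht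
  have hzc : ContinuousOn z (Ici 0) := by
    refine (continuousOn_const.div ((Continuous.continuousOn (by fun_prop)).rpow_const
      fun t ht => Or.inl (hpos t ht).ne') fun t ht => ?_).congr fun t _ => hz t
    exact (rpow_pos_of_pos (hpos t ht) r).ne'
  exact hzc.rpow_const fun t ht => Or.inl (hz t ▸ div_pos hC (rpow_pos_of_pos (hpos t ht) r)).ne'

theorem tendsto_div_sub_mul_exp_add_rpow (hb : 0 < b) (hc : 0 < c) :
    Tendsto (fun t => C / ((a - b) * exp (-c * t) + b) ^ r) atTop (𝓝 (C / b ^ r)) := by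
  have hexp : Tendsto (fun t => exp (-c * t)) atTop (𝓝 0) := by
    have := tendsto_exp_neg_atTop_nhds_zero.comp (tendsto_id.const_mul_atTop hc)
    simpa only [Function.comp_def, id, neg_mul] using this
  have hbase : Tendsto (fun t => (a - b) * exp (-c * t) + b) atTop (𝓝 b) := by
    simpa using (hexp.const_mul (a - b)).add_const b
  exact tendsto_const_nhds.div (hbase.rpow_const (Or.inl hb.ne')) (rpow_pos_of_pos hb r).ne'

end TransitionPath

theorem rpow_sub_one_eq_inv_of_eq_rpow {x y β : ℝ} (hx : 0 < x) (hβ : β ≠ 1)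
    (hy : y = x ^ (1 / (1 - β))) : y ^ (β - 1) = x⁻¹ := by
  have hexp : 1 / (1 - β) * (β - 1) = -1 := by
    field_simp [sub_ne_zero.2 hβ.symm]
    ring
  rw [hy, ← rpow_mul hx.le, hexp, rpow_neg_one]

theorem rpow_sub_div_eq_inv_mul_of_eq_rpow {x y β σ : ℝ} (hx : 0 < x) (hβ : β ≠ 1) (hσ : σ ≠ 0)
    (hy : y = x ^ (1 / (1 - β))) : y ^ (β - β / σ) = x⁻¹ * y ^ ((σ - β) / σ) := by
  have hexp : β - β / σ = (β - 1) + (σ - β) / σ := by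
    field_simp
    ring
  rw [← rpow_sub_one_eq_inv_of_eq_rpow hx hβ hy, hexp, rpow_add (hy ▸ rpow_pos_of_pos hx _)]

theorem mul_div_mul_add_mul_eq {a x B S e : ℝ} (he : e ≠ 0) :
    a * x / (B * x + S * e) = a * (x / e) / (B * (x / e) + S) := by
  rw [← mul_div_mul_right (a * (x / e)) _ he]
  field_simp

theorem xi_pos {β σ pi δs ρ : ℝ} (hβ0 : 0 < β) (hβ1 : β < 1) (hσ : 0 < σ) (hpi : 0 ≤ pi)
    (hδs : 0 < δs) (hδρ : δs < ρ + δs * σ) :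
    0 < (δs + pi * (1 - β)) / β - (δs - ρ) / σ := by
  have h1 : (δs - ρ) / σ < δs := (div_lt_iff₀ hσ).2 (by linarith)
  have h2 : δs < (δs + pi * (1 - β)) / β := (lt_div_iff₀ hβ0).2 (by nlinarith)
  linarith

theorem bgp_denominator_eq {β σ γ pi δs ρ ξ W : ℝ} (hβ : β ≠ 0) (hσ : σ ≠ 0)
    (hδpi : δs + pi ≠ 0) (hξ0 : ξ ≠ 0) (hξ : ξ = (δs + pi * (1 - β)) / β - (δs - ρ) / σ) :
    (β * γ * (1 - σ) - (ρ + pi - pi * σ) * (β * γ / (δs + pi))) * (W / ξ)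
      + σ * (β * γ / (δs + pi) * W) = σ * γ * (1 - β) * W / ξ := by
  field_simp
  subst hξ
  field_simp
  ring

theorem u_tendsto_ubar_general (β σ γ pi δs ρ k0 u0 z0 : ℝ)
    (hβ0 : 0 < β) (hβ1 : β < 1) (hσ : 0 < σ) (hγ : 0 < γ)
    (hpi : 0 ≤ pi) (hδs : 0 < δs)
    (hδρ : δs < ρ + δs * σ)
    (hz0 : 0 < z0)
    (D : ℝ)
    (hslope : γ * (1 - β) * (ρ - δs + δs * σ) / δs = u0 / k0 * D)
    (ξ zbar ubar K : ℝ)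
    (hξ : ξ = (δs + pi * (1 - β)) / β - (δs - ρ) / σ)
    (hzbar : zbar = ((δs + pi) / (β * γ)) ^ (1 / (1 - β)))
    (hubar : ubar = (ρ + δs * (σ - 1)) / (δs * σ))
    (z F u : ℝ → ℝ)
    (hz : ∀ t, z t = zbar * z0 /
      ((zbar ^ (1 - β) - z0 ^ (1 - β)) * Real.exp (-((1 - β) * (δs + pi) / β) * t)
        + z0 ^ (1 - β)) ^ (1 / (1 - β)))
    (hF : ∀ t, F t = ∫ s in (0:ℝ)..t, z s ^ ((σ - β) / σ) * Real.exp (-ξ * s))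
    (hu : ∀ t, u t = u0 / k0 * D * (K - F t) /
      ((β * γ * (1 - σ) - (ρ + pi - pi * σ) * z t ^ (β - 1)) * (K - F t)
        + σ * z t ^ (β - β / σ) * Real.exp (-ξ * t)))
    (hFlim : Tendsto F atTop (nhds K)) :
    Tendsto u atTop (nhds ubar) := by
  have hβ1' : 0 < 1 - β := sub_pos.2 hβ1
  have hδpi : 0 < δs + pi := by linarith
  have hzbar0 : 0 < zbar := hzbar ▸ rpow_pos_of_pos (by positivity) _
  have hξ0 : 0 < ξ := hξ ▸ xi_pos hβ0 hβ1 hσ hpi hδs hδρ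
  have hc : 0 < (1 - β) * (δs + pi) / β := by positivity
  have hzbar' : 0 < zbar ^ (1 - β) := rpow_pos_of_pos hzbar0 _
  have hz0' : 0 < z0 ^ (1 - β) := rpow_pos_of_pos hz0 _
  have hzlim : Tendsto z atTop (𝓝 zbar) := by
    have := tendsto_div_sub_mul_exp_add_rpow (C := zbar * z0) (a := zbar ^ (1 - β))
      (r := 1 / (1 - β)) hz0' hc
    rwa [one_div, rpow_rpow_inv hz0.le hβ1'.ne', mul_div_cancel_right₀ _ hz0.ne', ← one_div,
      ← funext hz] at this
  have hw : zbar ^ (β - 1) = β * γ / (δs + pi) := by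
    rw [rpow_sub_one_eq_inv_of_eq_rpow (by positivity) hβ1.ne hzbar, inv_div]
  have hq : zbar ^ (β - β / σ) = β * γ / (δs + pi) * zbar ^ ((σ - β) / σ) := by
    rw [rpow_sub_div_eq_inv_mul_of_eq_rpow (by positivity) hβ1.ne hσ.ne' hzbar, inv_div]
  have hzpow (p : ℝ) : Tendsto (fun t => z t ^ p) atTop (𝓝 (zbar ^ p)) :=
    hzlim.rpow_const (Or.inl hzbar0.ne')
  have hH := tendsto_sub_integral_div_exp hξ0
    (continuousOn_rpow_of_eq_div_sub_mul_exp_add_rpow (by positivity) hzbar' hz0' hc.le hz _)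
    (hzpow _) hF hFlim
  have hden := bgp_denominator_eq (γ := γ) (ρ := ρ) (W := zbar ^ ((σ - β) / σ))
    hβ0.ne' hσ.ne' hδpi.ne' hξ0.ne' hξ
  have hlim := (hH.const_mul (u0 / k0 * D)).div
    (((tendsto_const_nhds.sub ((hzpow (β - 1)).const_mul (ρ + pi - pi * σ))).mul hH).add
      ((hzpow (β - β / σ)).const_mul σ))
    (by rw [hw, hq, hden]; have := rpow_pos_of_pos hzbar0 ((σ - β) / σ); positivity)
  rw [hw, hq, hden] at hlim
  convert hlim using 2
  · funext t
    rw [hu, Pi.div_apply, mul_div_mul_add_mul_eq (exp_pos _).ne']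
  · rw [← hslope, hubar]
    field_simp
    ring

/-- Along the second closed-form solution of the transformed Lucas-Uzawa model,
the fraction of labor u(t) converges to its balanced-growth-path value ū. -/
theorem u_tendsto_ubar (β σ γ pi δs ρ c0 k0 u0 z0 : ℝ)
    (hβ0 : 0 < β) (hβ1 : β < 1) (hσ : 0 < σ) (hσ1 : σ ≠ 1) (hγ : 0 < γ)
    (hpi : 0 ≤ pi) (hδs : 0 < δs) (hρ : 0 < ρ) (hρδ : ρ < δs)
    (hδρ : δs < ρ + δs * σ)
    (hc0 : 0 < c0) (hk0 : 0 < k0) (hu0 : 0 < u0) (hz0 : 0 < z0)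
    (D : ℝ)
    (hD : D = σ * c0 * z0 ^ (β - 1) - (ρ + pi - pi * σ) * k0 * z0 ^ (β - 1)
      + β * γ * (1 - σ) * k0)
    (hslope : γ * (1 - β) * (ρ - δs + δs * σ) / δs = u0 / k0 * D)
    (ξ zbar ubar K : ℝ)
    (hξ : ξ = (δs + pi * (1 - β)) / β - (δs - ρ) / σ)
    (hzbar : zbar = ((δs + pi) / (β * γ)) ^ (1 / (1 - β)))
    (hubar : ubar = (ρ + δs * (σ - 1)) / (δs * σ))
    (hK : K = k0 / (c0 * z0 ^ ((β - σ) / σ)))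
    (z F u : ℝ → ℝ)
    (hz : ∀ t, z t = zbar * z0 /
      ((zbar ^ (1 - β) - z0 ^ (1 - β)) * Real.exp (-((1 - β) * (δs + pi) / β) * t)
        + z0 ^ (1 - β)) ^ (1 / (1 - β)))
    (hF : ∀ t, F t = ∫ s in (0:ℝ)..t, z s ^ ((σ - β) / σ) * Real.exp (-ξ * s))
    (hu : ∀ t, u t = u0 / k0 * D * (K - F t) /
      ((β * γ * (1 - σ) - (ρ + pi - pi * σ) * z t ^ (β - 1)) * (K - F t)
        + σ * z t ^ (β - β / σ) * Real.exp (-ξ * t)))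
    (hKF : ∀ t ≥ (0:ℝ), 0 < K - F t)
    (hden : ∀ t ≥ (0:ℝ),
      0 < (β * γ * (1 - σ) - (ρ + pi - pi * σ) * z t ^ (β - 1)) * (K - F t)
        + σ * z t ^ (β - β / σ) * Real.exp (-ξ * t))
    (hFlim : Tendsto F atTop (nhds K)) :
    Tendsto u atTop (nhds ubar) :=
  u_tendsto_ubar_general β σ γ pi δs ρ k0 u0 z0 hβ0 hβ1 hσ hγ hpi hδs hδρ hz0 D hslope ξ zbar ubar K
    hξ hzbar hubar z F u hz hF hu hFlim
end

section
/- Let 0 < β < 1, σ > 0, γ > 0, π ≥ 0, δ* > 0, ρ > 0 with ρ < δ* < ρ + δ*σ, and c₀, k₀, z₀ > 0. Set ξ := (δ*+π(1−β))/β − (δ*−ρ)/σ, z̄ := ((δ*+π)/(βγ))^{1/(1−β)}, K := k₀/(c₀z₀^{(β−σ)/σ}), z(t) := z̄z₀/[(z̄^{1−β}−z₀^{1−β})e^{−((1−β)(δ*+π)/β)t}+z₀^{1−β}]^{1/(1−β)}, F(t) := ∫₀ᵗ z(s)^{(σ−β)/σ}e^{−ξ s} ds, c(t) := c₀z₀^{β/σ}e^{−((ρ−δ*)/σ)t}z(t)^{−β/σ},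 k(t) := (K−F(t))c₀z₀^{β/σ}z(t)^{−1}e^{((δ*+π−πβ)/β)t}. Assume K − F(t) > 0 for all t ≥ 0 and lim_{t→∞} F(t) = K. Then c(t)/k(t) tends to ξ as t → ∞. -/
/-!
With `q = (σ - β) / σ` the exponents in `c` and `k` combine to
`c t / k t = z t ^ q * e^{-ξ t} / (K - F t)`, where `K - F t = ∫_t^∞ z s ^ q e^{-ξ s} ds` is the
tail of the convergent integral defining `F`. As `z → zbar` and `ξ > 0`, L'Hôpital's rule gives
`e^{-ξ t} / (K - F t) → ξ / zbar ^ q`, hence `c t / k t → ξ`.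
-/

open Filter Set Real Topology

theorem hasDerivAt_integral_of_continuousOn_Ici {f : ℝ → ℝ} {a b : ℝ}
    (hf : ContinuousOn f (Ici a)) (hb : a < b) :
    HasDerivAt (fun t => ∫ s in a..t, f s) (f b) b := by
  refine intervalIntegral.integral_hasDerivAt_right ?_ ?_ ?_
  · exact (hf.mono (uIcc_of_le hb.le ▸ Icc_subset_Ici_self)).intervalIntegrable
  · exact (hf.mono Ioi_subset_Ici_self).stronglyMeasurableAtFilter isOpen_Ioi b hb
  · exact hf.continuousAt (Ici_mem_nhds hb)

theorem tendsto_exp_div_sub_integral {u : ℝ → ℝ} {a ξ K L : ℝ} (hξ : 0 < ξ)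
    (hu : ContinuousOn u (Ici a)) (huL : Tendsto u atTop (𝓝 L)) (hL : L ≠ 0)
    (hK : Tendsto (fun t => ∫ s in a..t, u s * exp (-ξ * s)) atTop (𝓝 K)) :
    Tendsto (fun t => exp (-ξ * t) / (K - ∫ s in a..t, u s * exp (-ξ * s))) atTop
      (𝓝 (ξ / L)) := by
  have hexp : Tendsto (fun t => exp (-ξ * t)) atTop (𝓝 0) :=
    tendsto_exp_atBot.comp (tendsto_id.const_mul_atTop_of_neg (neg_neg_of_pos hξ))
  have hcont : ContinuousOn (fun s => u s * exp (-ξ * s)) (Ici a) := by fun_prop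
  refine HasDerivAt.lhopital_zero_atTop (f' := fun t => -ξ * exp (-ξ * t))
    (g' := fun t => -(u t * exp (-ξ * t))) ?_ ?_ ?_ hexp ?_ ?_
  · refine Eventually.of_forall fun t => ?_
    simpa [mul_comm] using ((hasDerivAt_id t).const_mul (-ξ)).exp
  · filter_upwards [eventually_gt_atTop a] with t ht
    simpa using (hasDerivAt_integral_of_continuousOn_Ici hcont ht).const_sub K
  · filter_upwards [huL.eventually_ne hL] with t ht
    exact neg_ne_zero.2 (mul_ne_zero ht (exp_pos _).ne')
  · simpa using hK.const_sub K
  · refine (tendsto_const_nhds.div huL hL).congr' ?_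
    filter_upwards [huL.eventually_ne hL] with t ht
    simp only [Pi.div_apply]
    field_simp

/-- The generalized logistic (Richards) curve from `z0` at `t = 0` to `zbar` at `t = ∞`. -/
noncomputable def richardsCurve (p a zbar z0 t : ℝ) : ℝ :=
  zbar * z0 / ((zbar ^ p - z0 ^ p) * exp (-a * t) + z0 ^ p) ^ (1 / p)

section richardsCurve

variable {p a zbar z0 : ℝ}

theorem richardsCurve_denom_pos (ha : 0 ≤ a) (hzbar : 0 < zbar) (hz0 : 0 < z0) {t : ℝ}
    (ht : 0 ≤ t) : 0 < (zbar ^ p - z0 ^ p) * exp (-a * t) + z0 ^ p := by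
  have hexp_le : exp (-a * t) ≤ 1 := exp_le_one_iff.2 (by nlinarith)
  have hzbar_p : 0 < zbar ^ p * exp (-a * t) := by positivity
  have hz0_p : 0 ≤ z0 ^ p * (1 - exp (-a * t)) :=
    mul_nonneg (rpow_pos_of_pos hz0 p).le (sub_nonneg.2 hexp_le)
  linarith

theorem richardsCurve_pos (ha : 0 ≤ a) (hzbar : 0 < zbar) (hz0 : 0 < z0) {t : ℝ}
    (ht : 0 ≤ t) : 0 < richardsCurve p a zbar z0 t :=
  div_pos (mul_pos hzbar hz0) (rpow_pos_of_pos (richardsCurve_denom_pos ha hzbar hz0 ht) _)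

theorem continuousOn_richardsCurve (ha : 0 ≤ a) (hzbar : 0 < zbar) (hz0 : 0 < z0) :
    ContinuousOn (richardsCurve p a zbar z0) (Ici 0) := by
  have hden : ∀ t ∈ Ici (0 : ℝ), 0 < (zbar ^ p - z0 ^ p) * exp (-a * t) + z0 ^ p :=
    fun t ht => richardsCurve_denom_pos ha hzbar hz0 ht
  exact continuousOn_const.div
    (ContinuousOn.rpow_const (by fun_prop) fun t ht => Or.inl (hden t ht).ne')
    fun t ht => (rpow_pos_of_pos (hden t ht) _).ne'

theorem tendsto_richardsCurve (hp : p ≠ 0) (ha : 0 < a) (hz0 : 0 < z0) :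
    Tendsto (richardsCurve p a zbar z0) atTop (𝓝 zbar) := by
  have hexp : Tendsto (fun t => exp (-a * t)) atTop (𝓝 0) :=
    tendsto_exp_atBot.comp (tendsto_id.const_mul_atTop_of_neg (neg_neg_of_pos ha))
  have hden : Tendsto (fun t => ((zbar ^ p - z0 ^ p) * exp (-a * t) + z0 ^ p) ^ (1 / p))
      atTop (𝓝 z0) := by
    have h := (hexp.const_mul (zbar ^ p - z0 ^ p)).add_const (z0 ^ p)
    rw [mul_zero, zero_add] at h
    simpa only [← rpow_mul hz0.le, mul_one_div_cancel hp, rpow_one] using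
      h.rpow_const (p := 1 / p) (Or.inl (rpow_pos_of_pos hz0 p).ne')
  have h := (tendsto_const_nhds (x := zbar * z0)).div hden hz0.ne'
  rwa [mul_div_cancel_right₀ _ hz0.ne'] at h

end richardsCurve

theorem lucasUzawa_xi_pos {β σ pi δs ρ : ℝ} (hβ0 : 0 < β) (hβ1 : β < 1) (hσ : 0 < σ)
    (hδpi : 0 ≤ δs + pi) (hδρ : δs < ρ + δs * σ) :
    0 < (δs + pi * (1 - β)) / β - (δs - ρ) / σ := by
  have h1 : (δs - ρ) / σ < δs := (div_lt_iff₀ hσ).2 (by linarith)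
  have h2 : δs ≤ (δs + pi * (1 - β)) / β := by
    rw [le_div_iff₀ hβ0]
    nlinarith
  linarith

theorem lucasUzawa_c_div_k {β σ pi δs ρ ξ c0 z0 zt G t : ℝ} (hβ : β ≠ 0) (hσ : σ ≠ 0)
    (hc0 : c0 ≠ 0) (hz0 : 0 < z0) (hzt : 0 < zt)
    (hξ : ξ = (δs + pi * (1 - β)) / β - (δs - ρ) / σ) :
    c0 * z0 ^ (β / σ) * exp (-((ρ - δs) / σ) * t) * zt ^ (-(β / σ))
        / (G * c0 * z0 ^ (β / σ) * zt ^ (-(1:ℝ)) * exp ((δs + pi - pi * β) / β * t))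
      = zt ^ ((σ - β) / σ) * exp (-ξ * t) / G := by
  have hexp : exp (-((ρ - δs) / σ) * t) = exp (-ξ * t) * exp ((δs + pi - pi * β) / β * t) := by
    rw [← exp_add, hξ]
    congr 1
    field_simp
    ring
  have hpow : zt ^ (-(β / σ)) = zt ^ ((σ - β) / σ) * zt ^ (-(1:ℝ)) := by
    rw [← rpow_add hzt]
    congr 1
    field_simp
    ring
  have hX : c0 * z0 ^ (β / σ) * zt ^ (-(1:ℝ)) * exp ((δs + pi - pi * β) / β * t) ≠ 0 := by
    positivity
  rw [hexp, hpow, ← mul_div_mul_right _ G hX]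
  ring

theorem ck_tendsto_xi_general (β σ γ pi δs ρ c0 z0 : ℝ)
    (hβ0 : 0 < β) (hβ1 : β < 1) (hσ : 0 < σ) (hγ : 0 < γ)
    (hpi : 0 ≤ pi) (hδs : 0 < δs)
    (hδρ : δs < ρ + δs * σ)
    (hc0 : 0 < c0) (hz0 : 0 < z0)
    (ξ zbar K : ℝ)
    (hξ : ξ = (δs + pi * (1 - β)) / β - (δs - ρ) / σ)
    (hzbar : zbar = ((δs + pi) / (β * γ)) ^ (1 / (1 - β)))
    (z F c k : ℝ → ℝ)
    (hz : ∀ t, z t = zbar * z0 /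
      ((zbar ^ (1 - β) - z0 ^ (1 - β)) * Real.exp (-((1 - β) * (δs + pi) / β) * t)
        + z0 ^ (1 - β)) ^ (1 / (1 - β)))
    (hF : ∀ t, F t = ∫ s in (0:ℝ)..t, z s ^ ((σ - β) / σ) * Real.exp (-ξ * s))
    (hc : ∀ t, c t = c0 * z0 ^ (β / σ) * Real.exp (-((ρ - δs) / σ) * t)
      * z t ^ (-(β / σ)))
    (hk : ∀ t, k t = (K - F t) * c0 * z0 ^ (β / σ) * z t ^ (-(1:ℝ))
      * Real.exp ((δs + pi - pi * β) / β * t))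
    (hFlim : Tendsto F atTop (nhds K)) :
    Tendsto (fun t => c t / k t) atTop (nhds ξ) := by
  have hδpi : 0 < δs + pi := by linarith
  have hzbar0 : 0 < zbar := hzbar ▸ rpow_pos_of_pos (by positivity) _
  have ha : 0 < (1 - β) * (δs + pi) / β := div_pos (mul_pos (sub_pos.2 hβ1) hδpi) hβ0
  have hz_eq : z = richardsCurve (1 - β) ((1 - β) * (δs + pi) / β) zbar z0 := funext hz
  have hz_pos : ∀ t ∈ Ici (0 : ℝ), 0 < z t := fun t ht =>
    hz_eq ▸ richardsCurve_pos ha.le hzbar0 hz0 ht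
  have hu_cont : ContinuousOn (fun t => z t ^ ((σ - β) / σ)) (Ici 0) :=
    (hz_eq ▸ continuousOn_richardsCurve ha.le hzbar0 hz0).rpow_const fun t ht =>
      Or.inl (hz_pos t ht).ne'
  have hu_lim : Tendsto (fun t => z t ^ ((σ - β) / σ)) atTop (𝓝 (zbar ^ ((σ - β) / σ))) :=
    (hz_eq ▸ tendsto_richardsCurve (by linarith) ha hz0).rpow_const (Or.inl hzbar0.ne')
  have hL : zbar ^ ((σ - β) / σ) ≠ 0 := (rpow_pos_of_pos hzbar0 _).ne'
  have hξ0 : 0 < ξ := hξ ▸ lucasUzawa_xi_pos hβ0 hβ1 hσ hδpi.le hδρ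
  have hF_eq : F = fun t => ∫ s in (0:ℝ)..t, z s ^ ((σ - β) / σ) * exp (-ξ * s) := funext hF
  have key := hu_lim.mul (tendsto_exp_div_sub_integral hξ0 hu_cont hu_lim hL (hF_eq ▸ hFlim))
  rw [mul_div_cancel₀ _ hL] at key
  refine key.congr' ?_
  filter_upwards [eventually_ge_atTop 0] with t ht
  rw [hc, hk, lucasUzawa_c_div_k hβ0.ne' hσ.ne' hc0.ne' hz0 (hz_pos t ht) hξ, hF, mul_div_assoc]

/-- Along the second closed-form solution of the transformed Lucas-Uzawa model,
the consumption-to-capital ratio c(t)/k(t) converges to its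
balanced-growth-path value ξ. -/
theorem ck_tendsto_xi (β σ γ pi δs ρ c0 k0 z0 : ℝ)
    (hβ0 : 0 < β) (hβ1 : β < 1) (hσ : 0 < σ) (hγ : 0 < γ)
    (hpi : 0 ≤ pi) (hδs : 0 < δs) (hρ : 0 < ρ) (hρδ : ρ < δs)
    (hδρ : δs < ρ + δs * σ)
    (hc0 : 0 < c0) (hk0 : 0 < k0) (hz0 : 0 < z0)
    (ξ zbar K : ℝ)
    (hξ : ξ = (δs + pi * (1 - β)) / β - (δs - ρ) / σ)
    (hzbar : zbar = ((δs + pi) / (β * γ)) ^ (1 / (1 - β)))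
    (hK : K = k0 / (c0 * z0 ^ ((β - σ) / σ)))
    (z F c k : ℝ → ℝ)
    (hz : ∀ t, z t = zbar * z0 /
      ((zbar ^ (1 - β) - z0 ^ (1 - β)) * Real.exp (-((1 - β) * (δs + pi) / β) * t)
        + z0 ^ (1 - β)) ^ (1 / (1 - β)))
    (hF : ∀ t, F t = ∫ s in (0:ℝ)..t, z s ^ ((σ - β) / σ) * Real.exp (-ξ * s))
    (hc : ∀ t, c t = c0 * z0 ^ (β / σ) * Real.exp (-((ρ - δs) / σ) * t)
      * z t ^ (-(β / σ)))
    (hk : ∀ t, k t = (K - F t) * c0 * z0 ^ (β / σ) * z t ^ (-(1:ℝ))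
      * Real.exp ((δs + pi - pi * β) / β * t))
    (hKF : ∀ t ≥ (0:ℝ), 0 < K - F t)
    (hFlim : Tendsto F atTop (nhds K)) :
    Tendsto (fun t => c t / k t) atTop (nhds ξ) :=
  ck_tendsto_xi_general β σ γ pi δs ρ c0 z0 hβ0 hβ1 hσ hγ hpi hδs hδρ hc0 hz0 ξ zbar K hξ hzbar z F
    c k hz hF hc hk hFlim
end
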